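/- arXiv:1209.0108 — 6 statements merged into one kernel-verified Lean document; each statement's English description precedes it below -/
import Mathlib

section
/- Let N ≥ 1 and j = N/2. The Dirac matrix D_N has exactly two eigenvalues: j+1 with multiplicity 2j+2 = N+2, and −j with multiplicity 2j = N; equivalently, the characteristic polynomial of D_N is (X − (j+1))^(N+2) · (X + j)^N. -/
noncomputable section
open Matrix Polynomial

/-- The diagonal matrix `H` with `H|m⟩ = m|m⟩`, `m = i - N/2` for index `i : Fin (N+1)`. -/
def Hmat (N : ℕ) : Matrix (Fin (N + 1)) (Fin (N + 1)) ℂ :=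
  Matrix.diagonal fun i => (i : ℂ) - (N : ℂ) / 2

/-- The raising operator `E` with `E|m⟩ = √((j-m)(j+m+1)) |m+1⟩`, `j = N/2`. -/
def Emat (N : ℕ) : Matrix (Fin (N + 1)) (Fin (N + 1)) ℂ := fun p q =>
  if (p : ℕ) = (q : ℕ) + 1 then (Real.sqrt ((N - (q : ℕ)) * ((q : ℕ) + 1)) : ℂ) else 0

def Fmat (N : ℕ) : Matrix (Fin (N + 1)) (Fin (N + 1)) ℂ := (Emat N)ᴴ

/-- The Dirac operator `D_N = [[1+H, F], [E, 1-H]]` in block form on `ℂ^(N+1) ⊗ ℂ²`. -/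
def DiracOp (N : ℕ) :
    Matrix (Fin (N + 1) ⊕ Fin (N + 1)) (Fin (N + 1) ⊕ Fin (N + 1)) ℂ :=
  Matrix.fromBlocks (1 + Hmat N) (Fmat N) (Emat N) (1 - Hmat N)

/-!
The operators `E`, `F = E*`, `H` satisfy the `sl₂` relations `[H, E] = E`, `[H, F] = -F` and the
Casimir identities `FE = j(j+1) - H(H+1)`, `EF = j(j+1) - H(H-1)`. Multiplying out the blocks,
these give `D² = D + j(j+1)`, i.e. `(D - (j+1))(D + j) = 0`, so every eigenvalue of `D` is
`j + 1` or `-j`. Their multiplicities `k, l` satisfy `k + l = 2N + 2` and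
`k(j+1) - lj = tr D = 2N + 2`, which forces `k = N + 2` and `l = N`.
-/

namespace Matrix

theorem trace_fromBlocks {m n R : Type*} [Fintype m] [Fintype n] [AddCommMonoid R]
    (A : Matrix m m R) (B : Matrix m n R) (C : Matrix n m R) (D : Matrix n n R) :
    (fromBlocks A B C D).trace = A.trace + D.trace := by
  simp only [trace, diag, Fintype.sum_sum_type, fromBlocks_apply₁₁, fromBlocks_apply₂₂]

variable {K : Type*} [Field K] {n : Type*} [Fintype n] [DecidableEq n]

theorem isRoot_of_aeval_eq_zero_of_isRoot_charpoly {A : Matrix n n K} {p : K[X]}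
    (hp : aeval A p = 0) {r : K} (hr : A.charpoly.IsRoot r) : p.IsRoot r := by
  have hσ : r ∈ spectrum K A := mem_spectrum_iff_isRoot_charpoly.2 hr
  have : Nontrivial (Matrix n n K) := by
    by_contra h
    have := not_nontrivial_iff_subsingleton.1 h
    simp [spectrum.of_subsingleton] at hσ
  simpa [hp] using spectrum.subset_polynomial_aeval A p ⟨r, hσ, rfl⟩

theorem exists_charpoly_eq_of_sub_smul_mul_sub_smul_eq_zero [IsAlgClosed K] {A : Matrix n n K}
    {a b : K} (hA : (A - a • 1) * (A - b • 1) = 0) :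
    ∃ k l : ℕ, k + l = Fintype.card n ∧ k • a + l • b = A.trace ∧
      A.charpoly = (X - C a) ^ k * (X - C b) ^ l := by
  classical
  have hsplits : A.charpoly.Splits := IsAlgClosed.splits _
  have hroots : ∀ r ∈ A.charpoly.roots, r ≠ a → r = b := by
    intro r hr hra
    have hp : aeval A ((X - C a) * (X - C b)) = 0 := by
      simpa [Algebra.algebraMap_eq_smul_one] using hA
    have := isRoot_of_aeval_eq_zero_of_isRoot_charpoly hp (isRoot_of_mem_roots hr)
    simpa [sub_eq_zero, hra] using this
  set k := A.charpoly.roots.count a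
  set l := (A.charpoly.roots.filter (· ≠ a)).card
  have hdecomp : A.charpoly.roots = Multiset.replicate k a + Multiset.replicate l b := by
    conv_lhs => rw [← Multiset.filter_add_not (· = a) A.charpoly.roots]
    congr 1
    · convert Multiset.filter_eq' A.charpoly.roots a
    · refine Multiset.eq_replicate_card.2 fun r hr => ?_
      rw [Multiset.mem_filter] at hr
      exact hroots r hr.1 hr.2
  refine ⟨k, l, ?_, ?_, ?_⟩
  · rw [← Multiset.card_replicate k a, ← Multiset.card_replicate l b, ← Multiset.card_add,
      ← hdecomp, splits_iff_card_roots.1 hsplits, charpoly_natDegree_eq_dim]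
  · rw [trace_eq_sum_roots_charpoly_of_splits hsplits, hdecomp]
    simp
  · rw [hsplits.eq_prod_roots_of_monic A.charpoly_monic, hdecomp]
    simp

end Matrix

theorem Hmat_conjTranspose (N : ℕ) : (Hmat N)ᴴ = Hmat N := by
  simp [Hmat, diagonal_conjTranspose]

theorem lie_Hmat_Emat (N : ℕ) : ⁅Hmat N, Emat N⁆ = Emat N := by
  ext p q
  simp only [Ring.lie_def, Hmat, Matrix.sub_apply, diagonal_mul, mul_diagonal, Emat]
  split_ifs with h
  · rw [h]; push_cast; ring
  · ring

theorem lie_Hmat_Fmat (N : ℕ) : ⁅Hmat N, Fmat N⁆ = -Fmat N := by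
  have h := congrArg conjTranspose (lie_Hmat_Emat N)
  rw [Ring.lie_def, conjTranspose_sub, conjTranspose_mul, conjTranspose_mul,
    Hmat_conjTranspose] at h
  rw [Ring.lie_def, ← neg_sub, Fmat, h]

theorem ofReal_sqrt_mul_self_Emat_coeff (N : ℕ) {q : ℕ} (hq : q ≤ N) :
    (Real.sqrt ((N - q) * (q + 1)) : ℂ) * (Real.sqrt ((N - q) * (q + 1)) : ℂ)
      = ((N : ℂ) - q) * (q + 1) := by
  have : (0 : ℝ) ≤ (N - q) * (q + 1) := by
    have : (q : ℝ) ≤ N := by exact_mod_cast hq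
    positivity
  rw [← Complex.ofReal_mul, Real.mul_self_sqrt this]
  push_cast; ring

theorem Fmat_mul_Emat_eq_diagonal (N : ℕ) :
    Fmat N * Emat N =
      diagonal fun q : Fin (N + 1) => ((N : ℂ) - (q : ℕ)) * ((q : ℕ) + 1) := by
  ext q q'
  simp only [Fmat, mul_apply, conjTranspose_apply, Emat, apply_ite star, star_zero,
    Complex.star_def, Complex.conj_ofReal, ite_mul, zero_mul, mul_ite, mul_zero, ← ite_and]
  rcases eq_or_ne q q' with rfl | hqq'
  · rw [diagonal_apply_eq]
    simp only [and_self]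
    rcases (Nat.lt_succ_iff.1 q.isLt).lt_or_eq with hq | hq
    · have hsucc (p : Fin (N + 1)) :
          (p : ℕ) = q + 1 ↔ p = ⟨q + 1, Nat.succ_lt_succ hq⟩ := by
        rw [Fin.ext_iff]
      simp only [hsucc, Finset.sum_ite_eq', Finset.mem_univ, if_true,
        ofReal_sqrt_mul_self_Emat_coeff N hq.le]
    · rw [Finset.sum_eq_zero fun (p : Fin (N + 1)) _ => if_neg (by have := p.isLt; omega), hq]
      ring
  · rw [diagonal_apply_ne _ hqq']
    refine Finset.sum_eq_zero fun p _ => if_neg fun h => hqq' (Fin.ext (by omega))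

theorem Emat_mul_Fmat_eq_diagonal (N : ℕ) :
    Emat N * Fmat N = diagonal fun p : Fin (N + 1) => ((N : ℂ) + 1 - (p : ℕ)) * (p : ℕ) := by
  ext p p'
  simp only [Fmat, mul_apply, conjTranspose_apply, Emat, apply_ite star, star_zero,
    Complex.star_def, Complex.conj_ofReal, ite_mul, zero_mul, mul_ite, mul_zero, ← ite_and]
  rcases eq_or_ne p p' with rfl | hpp'
  · rw [diagonal_apply_eq]
    simp only [and_self]
    rcases Nat.eq_zero_or_eq_succ_pred (p : ℕ) with hp | hp
    · rw [Finset.sum_eq_zero fun (q : Fin (N + 1)) _ => if_neg (by omega), hp]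
      ring
    · have hpred (q : Fin (N + 1)) :
          (p : ℕ) = q + 1 ↔ q = ⟨(p : ℕ) - 1, (Nat.sub_le _ _).trans_lt p.isLt⟩ := by
        simp only [Fin.ext_iff]; omega
      have hle : (p : ℕ) - 1 ≤ N := by have := p.isLt; omega
      simp only [hpred, Finset.sum_ite_eq', Finset.mem_univ, if_true,
        ofReal_sqrt_mul_self_Emat_coeff N hle]
      rw [Nat.cast_sub (by omega)]
      ring
  · rw [diagonal_apply_ne _ hpp']
    refine Finset.sum_eq_zero fun q _ => if_neg fun h => hpp' (Fin.ext (by omega))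

theorem Fmat_mul_Emat (N : ℕ) :
    Fmat N * Emat N = ((N : ℂ) / 2 * ((N : ℂ) / 2 + 1)) • 1 - Hmat N * (Hmat N + 1) := by
  rw [Fmat_mul_Emat_eq_diagonal, Hmat, smul_one_eq_diagonal, ← diagonal_one, diagonal_add,
    diagonal_mul_diagonal, diagonal_sub]
  congr 1; funext q; ring

theorem Emat_mul_Fmat (N : ℕ) :
    Emat N * Fmat N = ((N : ℂ) / 2 * ((N : ℂ) / 2 + 1)) • 1 - Hmat N * (Hmat N - 1) := by
  rw [Emat_mul_Fmat_eq_diagonal, Hmat, smul_one_eq_diagonal, ← diagonal_one, diagonal_sub,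
    diagonal_mul_diagonal, diagonal_sub]
  congr 1; funext q; ring

theorem DiracOp_mul_self (N : ℕ) :
    DiracOp N * DiracOp N = DiracOp N + ((N : ℂ) / 2 * ((N : ℂ) / 2 + 1)) • 1 := by
  have hHE : Hmat N * Emat N = Emat N + Emat N * Hmat N :=
    sub_eq_iff_eq_add.1 ((Ring.lie_def _ _).symm.trans (lie_Hmat_Emat N))
  have hHF : Hmat N * Fmat N = -Fmat N + Fmat N * Hmat N :=
    sub_eq_iff_eq_add.1 ((Ring.lie_def _ _).symm.trans (lie_Hmat_Fmat N))
  rw [DiracOp, fromBlocks_multiply, ← fromBlocks_one, fromBlocks_smul, fromBlocks_add,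
    fromBlocks_inj, smul_zero, add_zero]
  refine ⟨?_, ?_, ?_, ?_⟩
  · rw [Fmat_mul_Emat]
    noncomm_ring
  · rw [add_mul, mul_sub, one_mul, mul_one, hHF]
    abel
  · rw [mul_add, sub_mul, mul_one, one_mul, hHE]
    abel
  · rw [Emat_mul_Fmat]
    noncomm_ring

theorem DiracOp_sub_smul_mul_sub_smul (N : ℕ) :
    (DiracOp N - ((N : ℂ) / 2 + 1) • 1) * (DiracOp N - (-((N : ℂ) / 2)) • 1) = 0 := by
  simp only [sub_mul, mul_sub, mul_smul_comm, smul_mul_assoc, one_mul, mul_one,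
    DiracOp_mul_self]
  module

theorem trace_DiracOp (N : ℕ) : (DiracOp N).trace = 2 * ((N : ℂ) + 1) := by
  rw [DiracOp, trace_fromBlocks, ← trace_add, add_add_sub_cancel, ← two_smul ℂ, trace_smul,
    trace_one]
  simp

theorem diracN_charpoly_general (N : ℕ) :
    (DiracOp N).charpoly =
      (X - C ((N : ℂ) / 2 + 1)) ^ (N + 2) * (X + C ((N : ℂ) / 2)) ^ N := by
  obtain ⟨k, l, hcard, htrace, hcharpoly⟩ :=
    Matrix.exists_charpoly_eq_of_sub_smul_mul_sub_smul_eq_zero (DiracOp_sub_smul_mul_sub_smul N)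
  rw [Fintype.card_sum, Fintype.card_fin] at hcard
  have hcard' : (k : ℂ) + l = 2 * N + 2 := by exact_mod_cast (by omega : k + l = 2 * N + 2)
  rw [trace_DiracOp, nsmul_eq_mul, nsmul_eq_mul] at htrace
  have hk : ((k : ℂ) - (N + 2)) * (N + 1) = 0 := by
    linear_combination htrace + (N / 2 : ℂ) * hcard'
  obtain rfl : k = N + 2 := by
    have := (mul_eq_zero.1 hk).resolve_right (Nat.cast_add_one_ne_zero N)
    exact_mod_cast sub_eq_zero.1 this
  obtain rfl : l = N := by omega
  rw [hcharpoly, map_neg, sub_neg_eq_add]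

theorem diracN_charpoly (N : ℕ) (hN : 1 ≤ N) :
    (DiracOp N).charpoly =
      (X - C ((N : ℂ) / 2 + 1)) ^ (N + 2) * (X + C ((N : ℂ) / 2)) ^ N :=
  diracN_charpoly_general N
end
end

section
/- Let N ≥ 1. For every a ∈ M_(N+1)(ℂ), the following operator-norm inequalities hold: ‖[H, a]‖ ≤ ‖[D_N, a ⊗ 1₂]‖, ‖[E, a]‖ ≤ ‖[D_N, a ⊗ 1₂]‖, and ‖[F, a]‖ ≤ ‖[D_N, a ⊗ 1₂]‖. -/
noncomputable section
open Matrix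

/-- `a ⊗ 1₂` in block form. -/
def tensorOne (N : ℕ) (a : Matrix (Fin (N + 1)) (Fin (N + 1)) ℂ) :
    Matrix (Fin (N + 1) ⊕ Fin (N + 1)) (Fin (N + 1) ⊕ Fin (N + 1)) ℂ :=
  Matrix.fromBlocks a 0 0 a

/-- The operator norm of a square complex matrix, acting on Euclidean space. -/
def opNorm {n : Type*} [Fintype n] [DecidableEq n] (M : Matrix n n ℂ) : ℝ :=
  ‖Matrix.toEuclideanCLM (𝕜 := ℂ) M‖

/-!
The commutator `[D_N, a ⊗ 1₂]` is the block matrix `[[[H, a], [F, a]], [[E, a], -[H, a]]]`,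
the identity parts of `D_N` commuting with `a ⊗ 1₂`. A block is the compression `P M Qᴴ` of the
whole matrix by coordinate embeddings `P`, `Q`, which satisfy `P Pᴴ = 1` and so have operator
norm at most `1`; hence no block has larger operator norm than the commutator.
-/

open scoped Matrix.Norms.L2Operator

namespace Matrix

section Submatrix

variable {𝕜 : Type*} [RCLike 𝕜] {l m n o : Type*} [Fintype l] [Fintype m] [Fintype n] [Fintype o]

lemma l2_opNorm_one_le [DecidableEq n] : ‖(1 : Matrix n n 𝕜)‖ ≤ 1 := by
  rw [← diagonal_one, l2_opNorm_diagonal]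
  exact (pi_norm_le_iff_of_nonneg zero_le_one).2 fun _ => norm_one.le

lemma l2_opNorm_one_submatrix_le [DecidableEq m] {e : l → m} (he : Function.Injective e) :
    ‖(1 : Matrix m m 𝕜).submatrix e id‖ ≤ 1 := by
  classical
  set P := (1 : Matrix m m 𝕜).submatrix e id
  have hPP : P * Pᴴ = 1 := by
    rw [conjTranspose_submatrix, conjTranspose_one,
      ← submatrix_mul _ _ _ _ _ Function.bijective_id, Matrix.mul_one, submatrix_one _ he]
  have hP : ‖P‖ * ‖P‖ ≤ 1 := by
    rw [← l2_opNorm_conjTranspose P, ← l2_opNorm_conjTranspose_mul_self,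
      conjTranspose_conjTranspose, hPP]
    exact l2_opNorm_one_le
  nlinarith [norm_nonneg P]

lemma l2_opNorm_submatrix_le [DecidableEq n] [DecidableEq o] (M : Matrix m n 𝕜)
    {e : l → m} {f : o → n} (he : Function.Injective e) (hf : Function.Injective f) :
    ‖M.submatrix e f‖ ≤ ‖M‖ := by
  classical
  set P := (1 : Matrix m m 𝕜).submatrix e id
  set Q := (1 : Matrix n n 𝕜).submatrix f id
  have hM : M.submatrix e f = P * M * Qᴴ := by
    ext i j
    simp [P, Q, mul_apply, one_apply]
  calc ‖M.submatrix e f‖ ≤ ‖P‖ * ‖M‖ * ‖Qᴴ‖ := by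
        rw [hM]
        exact (l2_opNorm_mul _ _).trans (by gcongr; exact l2_opNorm_mul _ _)
    _ ≤ 1 * ‖M‖ * 1 := by
        rw [l2_opNorm_conjTranspose]
        gcongr
        exacts [l2_opNorm_one_submatrix_le he, l2_opNorm_one_submatrix_le hf]
    _ = ‖M‖ := by ring

end Submatrix

section Blocks

variable {m n : Type*} [Fintype m] [Fintype n]

lemma fromBlocks_mul_sub_mul_fromBlocks_diag {α : Type*} [Ring α] (A : Matrix m m α)
    (B : Matrix m n α) (C : Matrix n m α) (D : Matrix n n α) (a : Matrix m m α)
    (b : Matrix n n α) :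
    fromBlocks A B C D * fromBlocks a 0 0 b - fromBlocks a 0 0 b * fromBlocks A B C D =
      fromBlocks (A * a - a * A) (B * b - a * B) (C * a - b * C) (D * b - b * D) := by
  simp only [fromBlocks_multiply, Matrix.mul_zero, Matrix.zero_mul, add_zero, zero_add,
    sub_eq_add_neg, fromBlocks_neg, fromBlocks_add]

variable {𝕜 : Type*} [RCLike 𝕜] [DecidableEq m] [DecidableEq n]
  (A : Matrix m m 𝕜) (B : Matrix m n 𝕜) (C : Matrix n m 𝕜) (D : Matrix n n 𝕜)

lemma l2_opNorm_le_fromBlocks₁₁ : ‖A‖ ≤ ‖fromBlocks A B C D‖ :=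
  calc ‖A‖ = ‖(fromBlocks A B C D).submatrix Sum.inl Sum.inl‖ := rfl
    _ ≤ ‖fromBlocks A B C D‖ := l2_opNorm_submatrix_le _ Sum.inl_injective Sum.inl_injective

lemma l2_opNorm_le_fromBlocks₁₂ : ‖B‖ ≤ ‖fromBlocks A B C D‖ :=
  calc ‖B‖ = ‖(fromBlocks A B C D).submatrix Sum.inl Sum.inr‖ := rfl
    _ ≤ ‖fromBlocks A B C D‖ := l2_opNorm_submatrix_le _ Sum.inl_injective Sum.inr_injective

lemma l2_opNorm_le_fromBlocks₂₁ : ‖C‖ ≤ ‖fromBlocks A B C D‖ :=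
  calc ‖C‖ = ‖(fromBlocks A B C D).submatrix Sum.inr Sum.inl‖ := rfl
    _ ≤ ‖fromBlocks A B C D‖ := l2_opNorm_submatrix_le _ Sum.inr_injective Sum.inl_injective

end Blocks

end Matrix

lemma diracOp_mul_sub_mul_tensorOne (N : ℕ) (a : Matrix (Fin (N + 1)) (Fin (N + 1)) ℂ) :
    DiracOp N * tensorOne N a - tensorOne N a * DiracOp N =
      fromBlocks (Hmat N * a - a * Hmat N) (Fmat N * a - a * Fmat N)
        (Emat N * a - a * Emat N) (a * Hmat N - Hmat N * a) := by
  rw [DiracOp, tensorOne, fromBlocks_mul_sub_mul_fromBlocks_diag]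
  congr 1 <;> noncomm_ring

theorem comm_norm_le_general (N : ℕ) (a : Matrix (Fin (N + 1)) (Fin (N + 1)) ℂ) :
    opNorm (Hmat N * a - a * Hmat N) ≤
      opNorm (DiracOp N * tensorOne N a - tensorOne N a * DiracOp N) ∧
    opNorm (Emat N * a - a * Emat N) ≤
      opNorm (DiracOp N * tensorOne N a - tensorOne N a * DiracOp N) ∧
    opNorm (Fmat N * a - a * Fmat N) ≤
      opNorm (DiracOp N * tensorOne N a - tensorOne N a * DiracOp N) := by
  simp only [opNorm, l2_opNorm_toEuclideanCLM, diracOp_mul_sub_mul_tensorOne]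
  exact ⟨l2_opNorm_le_fromBlocks₁₁ .., l2_opNorm_le_fromBlocks₂₁ .., l2_opNorm_le_fromBlocks₁₂ ..⟩

theorem comm_norm_le (N : ℕ) (hN : 1 ≤ N) (a : Matrix (Fin (N + 1)) (Fin (N + 1)) ℂ) :
    opNorm (Hmat N * a - a * Hmat N) ≤
      opNorm (DiracOp N * tensorOne N a - tensorOne N a * DiracOp N) ∧
    opNorm (Emat N * a - a * Emat N) ≤
      opNorm (DiracOp N * tensorOne N a - tensorOne N a * DiracOp N) ∧
    opNorm (Fmat N * a - a * Fmat N) ≤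
      opNorm (DiracOp N * tensorOne N a - tensorOne N a * DiracOp N) :=
  comm_norm_le_general N a
end
end

section
/- Let N ≥ 1. If a ∈ M_(N+1)(ℂ) is hermitian (a = a*) and diagonal in the basis {|m⟩}, then ‖[D_N, a ⊗ 1₂]‖ = ‖[E, a]‖ = ‖[F, a]‖. -/
noncomputable section
open Matrix

/-! Since `a` is diagonal it commutes with `H`, so `[D_N, a ⊗ 1₂]` is the off-diagonal block
matrix with blocks `[F, a]` and `[E, a]`. The operator norm of such a matrix is the larger of the
norms of its blocks, and these agree because `[F, a] = -[E, a]*` for hermitian `a`. -/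

open scoped Matrix.Norms.L2Operator

namespace EuclideanSpace

variable {𝕜 : Type*} [RCLike 𝕜] {m n : Type*} [Fintype m] [Fintype n]

lemma norm_sq_toLp_sumElim (u : m → 𝕜) (v : n → 𝕜) :
    ‖WithLp.toLp 2 (Sum.elim u v)‖ ^ 2 = ‖WithLp.toLp 2 u‖ ^ 2 + ‖WithLp.toLp 2 v‖ ^ 2 := by
  simp [EuclideanSpace.norm_sq_eq, Fintype.sum_sum_type]

@[simp]
lemma norm_toLp_sumElim_zero (u : m → 𝕜) :
    ‖WithLp.toLp 2 (Sum.elim u (0 : n → 𝕜))‖ = ‖WithLp.toLp 2 u‖ := by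
  rw [← sq_eq_sq₀ (norm_nonneg _) (norm_nonneg _), norm_sq_toLp_sumElim]
  simp

@[simp]
lemma norm_toLp_zero_sumElim (v : n → 𝕜) :
    ‖WithLp.toLp 2 (Sum.elim (0 : m → 𝕜) v)‖ = ‖WithLp.toLp 2 v‖ := by
  rw [← sq_eq_sq₀ (norm_nonneg _) (norm_nonneg _), norm_sq_toLp_sumElim]
  simp

end EuclideanSpace

namespace Matrix

section L2OpNorm

variable {𝕜 : Type*} [RCLike 𝕜] {l m n o : Type*} [Fintype l] [Fintype m] [Fintype n] [Fintype o]
  [DecidableEq l] [DecidableEq n]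

lemma l2_opNorm_le_of_mulVec {A : Matrix m n 𝕜} {c : ℝ} (hc : 0 ≤ c)
    (h : ∀ x : EuclideanSpace 𝕜 n, ‖WithLp.toLp 2 (A *ᵥ x)‖ ≤ c * ‖x‖) : ‖A‖ ≤ c :=
  ContinuousLinearMap.opNorm_le_bound _ hc h

lemma l2_opNorm_fromBlocks_zero₁₁_zero₂₂ (B : Matrix m n 𝕜) (C : Matrix o l 𝕜) :
    ‖fromBlocks 0 B C 0‖ = max ‖B‖ ‖C‖ := by
  set X := fromBlocks 0 B C 0
  have hmulVec (x : l ⊕ n → 𝕜) :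
      X *ᵥ x = Sum.elim (B *ᵥ (x ∘ Sum.inr)) (C *ᵥ (x ∘ Sum.inl)) := by
    simp [X, fromBlocks_mulVec]
  apply le_antisymm
  · refine l2_opNorm_le_of_mulVec (by positivity) fun x => ?_
    set xl : EuclideanSpace 𝕜 l := WithLp.toLp 2 (x ∘ Sum.inl)
    set xr : EuclideanSpace 𝕜 n := WithLp.toLp 2 (x ∘ Sum.inr)
    have hx : ‖x‖ ^ 2 = ‖xl‖ ^ 2 + ‖xr‖ ^ 2 := by
      rw [← EuclideanSpace.norm_sq_toLp_sumElim, Sum.elim_comp_inl_inr]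
    refine (sq_le_sq₀ (norm_nonneg _) (by positivity)).mp ?_
    calc ‖WithLp.toLp 2 (X *ᵥ x)‖ ^ 2
        = ‖WithLp.toLp 2 (B *ᵥ xr)‖ ^ 2 + ‖WithLp.toLp 2 (C *ᵥ xl)‖ ^ 2 := by
          rw [hmulVec, EuclideanSpace.norm_sq_toLp_sumElim]
      _ ≤ (max ‖B‖ ‖C‖ * ‖xr‖) ^ 2 + (max ‖B‖ ‖C‖ * ‖xl‖) ^ 2 := by
          gcongr
          · exact (l2_opNorm_mulVec B xr).trans (by gcongr; exact le_max_left _ _)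
          · exact (l2_opNorm_mulVec C xl).trans (by gcongr; exact le_max_right _ _)
      _ = (max ‖B‖ ‖C‖ * ‖x‖) ^ 2 := by rw [mul_pow _ ‖x‖, hx]; ring
  · refine max_le (l2_opNorm_le_of_mulVec (norm_nonneg _) fun y => ?_)
      (l2_opNorm_le_of_mulVec (norm_nonneg _) fun y => ?_)
    · simpa [hmulVec] using l2_opNorm_mulVec X (WithLp.toLp 2 (Sum.elim 0 y))
    · simpa [hmulVec] using l2_opNorm_mulVec X (WithLp.toLp 2 (Sum.elim y 0))

end L2OpNorm

section Commutator

variable {α : Type*} [Ring α] {n : Type*} [Fintype n]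

lemma IsHermitian.lie_conjTranspose [StarRing α] {a : Matrix n n α} (ha : a.IsHermitian)
    (M : Matrix n n α) : ⁅Mᴴ, a⁆ = -⁅M, a⁆ᴴ := by
  simp [Ring.lie_def, conjTranspose_sub, conjTranspose_mul, ha.eq]

lemma lie_fromBlocks_fromBlocks_diag (A B C D X : Matrix n n α) :
    ⁅fromBlocks A B C D, fromBlocks X 0 0 X⁆ = fromBlocks ⁅A, X⁆ ⁅B, X⁆ ⁅C, X⁆ ⁅D, X⁆ := by
  simp only [Ring.lie_def, fromBlocks_multiply, mul_zero, zero_mul, add_zero, zero_add]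
  ext (i | i) (j | j) <;> rfl

end Commutator

end Matrix

theorem comm_norm_diag_general (N : ℕ) (a : Matrix (Fin (N + 1)) (Fin (N + 1)) ℂ)
    (ha : a.IsHermitian) (hdiag : a.IsDiag) :
    opNorm (DiracOp N * tensorOne N a - tensorOne N a * DiracOp N) =
      opNorm (Emat N * a - a * Emat N) ∧
    opNorm (DiracOp N * tensorOne N a - tensorOne N a * DiracOp N) =
      opNorm (Fmat N * a - a * Fmat N) := by
  have hHa : Commute (Hmat N) a := by
    rw [← hdiag.diagonal_diag]
    exact commute_diagonal _ _
  have hDirac : ⁅DiracOp N, tensorOne N a⁆ = fromBlocks 0 ⁅Fmat N, a⁆ ⁅Emat N, a⁆ 0 := by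
    rw [DiracOp, tensorOne, lie_fromBlocks_fromBlocks_diag,
      ((Commute.one_left a).add_left hHa).lie_eq, ((Commute.one_left a).sub_left hHa).lie_eq]
  have hFE : ‖⁅Fmat N, a⁆‖ = ‖⁅Emat N, a⁆‖ := by
    rw [Fmat, ha.lie_conjTranspose, norm_neg, l2_opNorm_conjTranspose]
  simp only [opNorm, l2_opNorm_toEuclideanCLM, ← Ring.lie_def, hDirac,
    l2_opNorm_fromBlocks_zero₁₁_zero₂₂, hFE, max_self, and_self]

theorem comm_norm_diag (N : ℕ) (hN : 1 ≤ N) (a : Matrix (Fin (N + 1)) (Fin (N + 1)) ℂ)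
    (ha : a.IsHermitian) (hdiag : a.IsDiag) :
    opNorm (DiracOp N * tensorOne N a - tensorOne N a * DiracOp N) =
      opNorm (Emat N * a - a * Emat N) ∧
    opNorm (DiracOp N * tensorOne N a - tensorOne N a * DiracOp N) =
      opNorm (Fmat N * a - a * Fmat N) :=
  comm_norm_diag_general N a ha hdiag
end
end

section
/- For N = 1: for every x, y in the closed unit ball B³ ⊂ ℝ³, letting ω_x denote the state on M₂(ℂ) given by ω_x(a₀·1₂ + a₁σ₁ + a₂σ₂ + a₃σ₃) := a₀ + x₁a₁ + x₂a₂ + x₃a₃ (for a₀, aᵢ ∈ ℝ, extended complex-linearly), the spectral distance satisfies d₁(ω_x, ω_y) = ½ |x − y|, where |x − y| is the Euclidean distance in ℝ³. -/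
noncomputable section
open Matrix

/-- The spectral distance between two states (functionals) on `M_(N+1)(ℂ)`:
`d_N(ω, ω') = sup { |ω(a) − ω'(a)| : a = a*, ‖[D_N, a ⊗ 1₂]‖ ≤ 1 }`. -/
def specDist (N : ℕ) (ω ω' : Matrix (Fin (N + 1)) (Fin (N + 1)) ℂ → ℂ) : ℝ :=
  sSup {r : ℝ | ∃ a : Matrix (Fin (N + 1)) (Fin (N + 1)) ℂ, a.IsHermitian ∧
    opNorm (DiracOp N * tensorOne N a - tensorOne N a * DiracOp N) ≤ 1 ∧
    r = ‖ω a - ω' a‖}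

/-- The three Pauli matrices. -/
def pauli : Fin 3 → Matrix (Fin 2) (Fin 2) ℂ :=
  ![!![0, 1; 1, 0], !![0, -Complex.I; Complex.I, 0], !![1, 0; 0, -1]]

/-- The state `ω_x` on `M₂(ℂ)` attached to a point `x` of the closed unit ball of `ℝ³`:
`ω_x(a₀·1 + Σ aₖ σₖ) = a₀ + Σ xₖ aₖ`, i.e. `ω_x(a) = Tr(a)/2 + Σₖ xₖ · Tr(σₖ a)/2`. -/
def omegaState (x : EuclideanSpace ℝ (Fin 3)) : Matrix (Fin 2) (Fin 2) ℂ → ℂ := fun a =>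
  a.trace / 2 + ∑ k : Fin 3, (x k : ℂ) * (pauli k * a).trace / 2

/-!
A hermitian `a ∈ M₂(ℂ)` is `c • 1 + ∑ₖ tₖ σₖ` with `c ∈ ℝ`, `t ∈ ℝ³`. The scalar part drops out of
both `ω_x(a) - ω_y(a) = ⟪x - y, t⟫` and the commutator `C = [D₁, a ⊗ 1]`. The commutator is
skew-adjoint with `C³ = -4‖t‖² C`, so the C*-identity gives `‖C‖ = 2‖t‖`. The supremum of
`|⟪x - y, t⟫|` over `‖t‖ ≤ 1/2` is `‖x - y‖ / 2` by Cauchy–Schwarz, attained at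
`t = (x - y) / (2‖x - y‖)`.
-/

open scoped Matrix.Norms.L2Operator InnerProductSpace

theorem CStarRing.norm_eq_of_star_eq_neg_of_cube {A : Type*} [CStarAlgebra A]
    {a : A} {c : ℝ} (hc : 0 ≤ c) (ha : a ≠ 0) (hstar : star a = -a)
    (hcube : a * a * a = -((c ^ 2 : ℝ) : ℂ) • a) : ‖a‖ = c := by
  have hs : ‖a * a‖ = ‖a‖ ^ 2 := by
    rw [← norm_neg, ← neg_mul, ← hstar, CStarRing.norm_star_mul_self, sq]
  have hs0 : ‖a * a‖ ≠ 0 := by rw [hs]; positivity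
  have hsa : IsSelfAdjoint (a * a) := by
    rw [IsSelfAdjoint, star_mul, hstar, neg_mul_neg]
  have hsq : ‖a * a‖ * ‖a * a‖ = c ^ 2 * ‖a * a‖ := by
    rw [← sq, ← hsa.norm_mul_self, ← mul_assoc, hcube, neg_smul, neg_mul, norm_neg,
      smul_mul_assoc, norm_smul, Complex.norm_real, Real.norm_of_nonneg (by positivity)]
  have : ‖a‖ ^ 2 = c ^ 2 := by rw [← hs]; exact mul_right_cancel₀ hs0 hsq
  exact (pow_left_inj₀ (norm_nonneg a) hc two_ne_zero).mp this

lemma opNorm_eq_norm {n : Type*} [Fintype n] [DecidableEq n] (M : Matrix n n ℂ) :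
    opNorm M = ‖M‖ :=
  rfl

lemma isHermitian_diracOp (N : ℕ) : (DiracOp N).IsHermitian := by
  have hH : (Hmat N).IsHermitian := by
    refine Matrix.isHermitian_diagonal_of_self_adjoint _ (funext fun i => ?_)
    simp
  exact (isHermitian_one.add hH).fromBlocks (conjTranspose_conjTranspose _)
    (isHermitian_one.sub hH)

def diracCommutator (N : ℕ) (a : Matrix (Fin (N + 1)) (Fin (N + 1)) ℂ) :
    Matrix (Fin (N + 1) ⊕ Fin (N + 1)) (Fin (N + 1) ⊕ Fin (N + 1)) ℂ :=
  DiracOp N * tensorOne N a - tensorOne N a * DiracOp N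

lemma diracCommutator_smul_one_add (N : ℕ) (c : ℂ)
    (a : Matrix (Fin (N + 1)) (Fin (N + 1)) ℂ) :
    diracCommutator N (c • 1 + a) = diracCommutator N a := by
  have : tensorOne N (c • 1 + a) = c • 1 + tensorOne N a := by
    rw [tensorOne, tensorOne, ← Matrix.fromBlocks_one, Matrix.fromBlocks_smul,
      Matrix.fromBlocks_add]
    simp
  simp only [diracCommutator, this, mul_add, add_mul, Matrix.mul_smul, Matrix.smul_mul,
    mul_one, one_mul]
  abel

lemma conjTranspose_diracCommutator {N : ℕ} {a : Matrix (Fin (N + 1)) (Fin (N + 1)) ℂ}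
    (ha : a.IsHermitian) : (diracCommutator N a)ᴴ = -diracCommutator N a := by
  have hA : (tensorOne N a).IsHermitian := ha.fromBlocks (by simp) ha
  rw [diracCommutator, Matrix.conjTranspose_sub, Matrix.conjTranspose_mul,
    Matrix.conjTranspose_mul, hA.eq, (isHermitian_diracOp N).eq, neg_sub]

def pauliVec (t : EuclideanSpace ℝ (Fin 3)) : Matrix (Fin 2) (Fin 2) ℂ :=
  ∑ k, (t k : ℂ) • pauli k

lemma pauliVec_eq (t : EuclideanSpace ℝ (Fin 3)) :
    pauliVec t = !![(t 2 : ℂ), t 0 - t 1 * Complex.I; t 0 + t 1 * Complex.I, -t 2] := by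
  ext i j
  fin_cases i <;> fin_cases j <;> simp [pauliVec, pauli, Fin.sum_univ_three]
  ring

lemma isHermitian_pauliVec (t : EuclideanSpace ℝ (Fin 3)) : (pauliVec t).IsHermitian := by
  rw [Matrix.IsHermitian, pauliVec_eq]
  ext i j
  fin_cases i <;> fin_cases j <;> simp [Matrix.conjTranspose_apply, Complex.ext_iff]

lemma Matrix.IsHermitian.exists_eq_smul_one_add_pauliVec {a : Matrix (Fin 2) (Fin 2) ℂ}
    (ha : a.IsHermitian) :
    ∃ (c : ℝ) (t : EuclideanSpace ℝ (Fin 3)), a = (c : ℂ) • 1 + pauliVec t := by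
  obtain ⟨p, hp⟩ : ∃ p : ℝ, a 0 0 = p := ⟨_, (ha.coe_re_apply_self 0).symm⟩
  obtain ⟨q, hq⟩ : ∃ q : ℝ, a 1 1 = q := ⟨_, (ha.coe_re_apply_self 1).symm⟩
  refine ⟨(p + q) / 2, !₂[(a 0 1).re, -(a 0 1).im, (p - q) / 2], ?_⟩
  rw [Matrix.eta_fin_two a, hp, hq, ← ha.apply 0 1, pauliVec_eq]
  ext i j
  fin_cases i <;> fin_cases j <;> simp [Complex.ext_iff] <;> ring

lemma omegaState_smul_one_add (x : EuclideanSpace ℝ (Fin 3)) (c : ℂ)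
    (a : Matrix (Fin 2) (Fin 2) ℂ) : omegaState x (c • 1 + a) = c + omegaState x a := by
  simp [omegaState, pauli, Fin.sum_univ_three, Matrix.trace_fin_two, mul_add, add_div]
  ring

lemma omegaState_pauliVec (x t : EuclideanSpace ℝ (Fin 3)) :
    omegaState x (pauliVec t) = (⟪x, t⟫_ℝ : ℂ) := by
  simp [omegaState, pauliVec_eq, pauli, Fin.sum_univ_three, Matrix.trace_fin_two,
    PiLp.inner_apply, Complex.ext_iff]
  ring

lemma omegaState_sub_omegaState_pauliVec (x y t : EuclideanSpace ℝ (Fin 3)) :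
    omegaState x (pauliVec t) - omegaState y (pauliVec t) = (⟪x - y, t⟫_ℝ : ℂ) := by
  rw [omegaState_pauliVec, omegaState_pauliVec, inner_sub_left, Complex.ofReal_sub]

lemma diracCommutator_one_pauliVec (t : EuclideanSpace ℝ (Fin 3)) :
    diracCommutator 1 (pauliVec t) =
      let z : ℂ := t 0 + t 1 * Complex.I
      Matrix.fromBlocks !![0, -star z; z, 0] !![z, -2 * t 2; 0, -z]
        !![-star z, 0; 2 * t 2, star z] !![0, star z; -z, 0] := by
  rw [diracCommutator, pauliVec_eq]
  ext i j
  rcases i with i | i <;> rcases j with j | j <;> fin_cases i <;> fin_cases j <;>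
    simp [DiracOp, tensorOne, Hmat, Emat, Fmat, Matrix.mul_apply,
      Fintype.sum_sum_type, Fin.sum_univ_succ, Matrix.one_apply] <;> ring_nf

lemma diracCommutator_one_pauliVec_cube (t : EuclideanSpace ℝ (Fin 3)) :
    let C := diracCommutator 1 (pauliVec t)
    C * C * C = -(((2 * ‖t‖) ^ 2 : ℝ) : ℂ) • C := by
  have ht : (2 * ‖t‖) ^ 2 = 4 * (t 0 ^ 2 + t 1 ^ 2 + t 2 ^ 2) := by
    simp [mul_pow, EuclideanSpace.norm_sq_eq, Fin.sum_univ_three]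
    norm_num
  simp only [diracCommutator_one_pauliVec, ht]
  ext i j
  rcases i with i | i <;> rcases j with j | j <;> fin_cases i <;> fin_cases j <;>
    refine Complex.ext ?_ ?_ <;>
    simp [Matrix.mul_apply, Fintype.sum_sum_type, Fin.sum_univ_succ, sq] <;>
    ring

lemma diracCommutator_one_pauliVec_ne_zero {t : EuclideanSpace ℝ (Fin 3)} (ht : t ≠ 0) :
    diracCommutator 1 (pauliVec t) ≠ 0 := by
  contrapose! ht
  rw [diracCommutator_one_pauliVec] at ht
  have h₁ := congrFun (congrFun ht (Sum.inl 1)) (Sum.inl 0)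
  have h₂ := congrFun (congrFun ht (Sum.inl 0)) (Sum.inr 1)
  simp [Complex.ext_iff] at h₁ h₂
  ext k
  fin_cases k <;> simp [h₁, h₂]

lemma opNorm_diracCommutator_one_pauliVec (t : EuclideanSpace ℝ (Fin 3)) :
    opNorm (diracCommutator 1 (pauliVec t)) = 2 * ‖t‖ := by
  rcases eq_or_ne t 0 with rfl | ht
  · simp [pauliVec, diracCommutator, tensorOne, opNorm_eq_norm]
  rw [opNorm_eq_norm]
  exact CStarRing.norm_eq_of_star_eq_neg_of_cube (by positivity)
    (diracCommutator_one_pauliVec_ne_zero ht)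
    (conjTranspose_diracCommutator (isHermitian_pauliVec t))
    (diracCommutator_one_pauliVec_cube t)

theorem specDist_ball_general (x y : EuclideanSpace ℝ (Fin 3)) :
    specDist 1 (omegaState x) (omegaState y) = ‖x - y‖ / 2 := by
  set n := ‖x - y‖ with hn
  refine IsGreatest.csSup_eq
    ⟨⟨pauliVec ((2 * n)⁻¹ • (x - y)), isHermitian_pauliVec _, ?_, ?_⟩, ?_⟩
  · change opNorm (diracCommutator 1 _) ≤ 1
    rw [opNorm_diracCommutator_one_pauliVec, norm_smul, ← hn, norm_inv,
      Real.norm_of_nonneg (by positivity), show 2 * ((2 * n)⁻¹ * n) = n / n by ring]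
    exact div_self_le_one n
  · rw [omegaState_sub_omegaState_pauliVec, real_inner_smul_right, real_inner_self_eq_norm_sq,
      ← hn, Complex.norm_real, Real.norm_eq_abs,
      show (2 * n)⁻¹ * n ^ 2 = n * n * n⁻¹ / 2 by ring, mul_self_mul_inv,
      abs_of_nonneg (by positivity)]
  · rintro r ⟨a, ha, hC, rfl⟩
    obtain ⟨c, t, rfl⟩ := ha.exists_eq_smul_one_add_pauliVec
    change opNorm (diracCommutator 1 _) ≤ 1 at hC
    rw [diracCommutator_smul_one_add, opNorm_diracCommutator_one_pauliVec] at hC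
    rw [omegaState_smul_one_add, omegaState_smul_one_add, add_sub_add_left_eq_sub,
      omegaState_sub_omegaState_pauliVec, Complex.norm_real, Real.norm_eq_abs]
    calc |⟪x - y, t⟫_ℝ| ≤ n * ‖t‖ := abs_real_inner_le_norm _ _
      _ ≤ n / 2 := by nlinarith [norm_nonneg (x - y)]

theorem specDist_ball (x y : EuclideanSpace ℝ (Fin 3)) (hx : ‖x‖ ≤ 1) (hy : ‖y‖ ≤ 1) :
    specDist 1 (omegaState x) (omegaState y) = ‖x - y‖ / 2 :=
  specDist_ball_general x y
end
end

section
/- Let N ≥ 1, j = N/2, and for m ∈ {−j, …, j} let ω_m be the vector state ω_m(a) := ⟨m| a |m⟩ on M_(N+1)(ℂ). Then for any m < n in {−j, …, j}, the spectral distance is d_N(ω_m, ω_n) = Σ_{k=m+1}^{n} 1/√((j+k)(j−k+1)). -/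
/-! The entry of `[D_N, a ⊗ 1₂]` at `(|k+1⟩ ⊗ e₂, |k⟩ ⊗ e₁)` is
`√((N-k)(k+1)) (a_kk - a_(k+1)(k+1))`. Entries are bounded by the operator norm, so every step
`‖a_kk - a_(k+1)(k+1)‖` is at most `1/√((k+1)(N-k))`, and the triangle inequality bounds
`‖a_pp - a_qq‖` by the sum of the steps. Conversely, for the diagonal matrix of partial sums of
these step lengths the commutator is `[[0, Lᴴ], [-L, 0]]` with `L` the lower shift; this matrix has
at most one nonzero entry, of modulus one, in each row and column, so its `Lᴴ L` is diagonal and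
its norm is at most one. -/

noncomputable section
open Matrix

open scoped Matrix.Norms.L2Operator

namespace Matrix

variable {l m n o 𝕜 : Type*} [RCLike 𝕜]

theorem norm_apply_le_l2_opNorm [Fintype m] [Fintype n] [DecidableEq n] (M : Matrix m n 𝕜)
    (i : m) (j : n) : ‖M i j‖ ≤ ‖M‖ := by
  have h := M.l2_opNorm_mulVec (EuclideanSpace.single j 1)
  rw [PiLp.norm_single, norm_one, mul_one] at h
  refine le_trans (le_of_eq ?_) ((PiLp.norm_apply_le _ i).trans h)
  simp

def IsPartialMonomial {α : Type*} [Zero α] (M : Matrix m n α) : Prop :=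
  (∀ i j j', M i j ≠ 0 → M i j' ≠ 0 → j = j') ∧ (∀ i i' j, M i j ≠ 0 → M i' j ≠ 0 → i = i')

theorem IsPartialMonomial.conjTranspose {M : Matrix m n 𝕜} (hM : M.IsPartialMonomial) :
    Mᴴ.IsPartialMonomial :=
  ⟨fun j i i' h h' => hM.2 i i' j (by simpa using h) (by simpa using h'),
    fun j j' i h h' => hM.1 i j j' (by simpa using h) (by simpa using h')⟩

theorem IsPartialMonomial.neg {M : Matrix m n 𝕜} (hM : M.IsPartialMonomial) :
    (-M).IsPartialMonomial :=
  ⟨fun i j j' h h' => hM.1 i j j' (by simpa using h) (by simpa using h'),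
    fun i i' j h h' => hM.2 i i' j (by simpa using h) (by simpa using h')⟩

theorem IsPartialMonomial.fromBlocks_zero {B : Matrix n m 𝕜} {C : Matrix o l 𝕜}
    (hB : B.IsPartialMonomial) (hC : C.IsPartialMonomial) :
    (fromBlocks 0 B C 0).IsPartialMonomial := by
  constructor
  · rintro (i | i) (j | j) (j' | j') h h' <;> simp only [fromBlocks_apply₁₁, fromBlocks_apply₁₂,
      fromBlocks_apply₂₁, fromBlocks_apply₂₂, zero_apply, ne_eq, not_true_eq_false] at h h' ⊢
    exacts [congrArg _ (hB.1 i j j' h h'), congrArg _ (hC.1 i j j' h h')]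
  · rintro (i | i) (i' | i') (j | j) h h' <;> simp only [fromBlocks_apply₁₁, fromBlocks_apply₁₂,
      fromBlocks_apply₂₁, fromBlocks_apply₂₂, zero_apply, ne_eq, not_true_eq_false] at h h' ⊢
    exacts [congrArg _ (hB.2 i i' j h h'), congrArg _ (hC.2 i i' j h h')]

variable [Fintype m]

theorem IsPartialMonomial.conjTranspose_mul_self [DecidableEq n] {M : Matrix m n 𝕜}
    (hM : M.IsPartialMonomial) :
    Mᴴ * M = diagonal fun j => ∑ i, star (M i j) * M i j := by
  ext j j'
  rw [mul_apply, diagonal_apply]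
  split_ifs with h
  · simp [h]
  · refine Finset.sum_eq_zero fun i _ => ?_
    by_contra hne
    exact h (hM.1 i j j' (by simpa using left_ne_zero_of_mul hne) (right_ne_zero_of_mul hne))

theorem IsPartialMonomial.l2_opNorm_le [Fintype n] [DecidableEq n] {M : Matrix m n 𝕜}
    (hM : M.IsPartialMonomial) {c : ℝ} (hc : 0 ≤ c) (hMc : ∀ i j, ‖M i j‖ ≤ c) : ‖M‖ ≤ c := by
  have hcol : ∀ j, ‖∑ i, star (M i j) * M i j‖ ≤ c * c := by
    intro j
    by_cases hj : ∃ i, M i j ≠ 0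
    · obtain ⟨i, hi⟩ := hj
      rw [Fintype.sum_eq_single i fun i' hi' => by
        by_contra hne
        exact hi' (hM.2 i' i j (right_ne_zero_of_mul hne) hi)]
      rw [norm_mul, norm_star]
      exact mul_self_le_mul_self (norm_nonneg _) (hMc i j)
    · push Not at hj
      simp [hj, mul_nonneg hc hc]
  have hsq : ‖M‖ * ‖M‖ ≤ c * c := by
    rw [← l2_opNorm_conjTranspose_mul_self, hM.conjTranspose_mul_self, l2_opNorm_diagonal]
    exact (pi_norm_le_iff_of_nonneg (mul_nonneg hc hc)).2 hcol
  exact (mul_self_le_mul_self_iff (norm_nonneg _) hc).2 hsq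

theorem mul_diagonal_sub_diagonal_mul_apply {R : Type*} [Fintype n] [DecidableEq n]
    [CommRing R] (M : Matrix n n R) (d : n → R) (i j : n) :
    (M * diagonal d - diagonal d * M) i j = M i j * (d j - d i) := by
  simp only [sub_apply, mul_diagonal, diagonal_mul]
  ring

end Matrix

def stepLength (N k : ℕ) : ℝ := 1 / Real.sqrt (k * (N + 1 - k))

theorem sqrt_mul_stepLength_succ {N k : ℕ} (hk : k < N) :
    Real.sqrt ((N - k) * (k + 1)) * stepLength N (k + 1) = 1 := by
  have hpos : (0 : ℝ) < (N - k) * (k + 1) := by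
    have : (k : ℝ) < N := by exact_mod_cast hk
    nlinarith
  rw [stepLength, mul_one_div, Nat.cast_succ, show ((k : ℝ) + 1) * (N + 1 - (k + 1)) =
    (N - k) * (k + 1) by ring, div_self (Real.sqrt_pos.2 hpos).ne']

variable {N : ℕ}

theorem DiracOp_mul_tensorOne_sub (a : Matrix (Fin (N + 1)) (Fin (N + 1)) ℂ) :
    DiracOp N * tensorOne N a - tensorOne N a * DiracOp N =
      fromBlocks ((1 + Hmat N) * a - a * (1 + Hmat N)) (Fmat N * a - a * Fmat N)
        (Emat N * a - a * Emat N) ((1 - Hmat N) * a - a * (1 - Hmat N)) := by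
  ext (i | i) (j | j) <;> simp [DiracOp, tensorOne, fromBlocks_multiply]

theorem Emat_mul_sub_mul_Emat_apply (a : Matrix (Fin (N + 1)) (Fin (N + 1)) ℂ) {k : ℕ}
    (hk : k < N) :
    (Emat N * a - a * Emat N) ⟨k + 1, by omega⟩ ⟨k, by omega⟩ =
      Real.sqrt ((N - k) * (k + 1)) *
        (a ⟨k, by omega⟩ ⟨k, by omega⟩ - a ⟨k + 1, by omega⟩ ⟨k + 1, by omega⟩) := by
  simp only [Matrix.sub_apply, mul_apply, Emat]
  rw [Fintype.sum_eq_single ⟨k, by omega⟩ fun x hx => by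
      rw [if_neg (by simpa [Fin.ext_iff] using hx.symm), zero_mul],
    Fintype.sum_eq_single ⟨k + 1, by omega⟩ fun x hx => by
      rw [if_neg (by simpa [Fin.ext_iff] using hx), mul_zero]]
  simp only [if_pos]
  ring

theorem norm_sub_le_stepLength {a : Matrix (Fin (N + 1)) (Fin (N + 1)) ℂ}
    (ha : opNorm (DiracOp N * tensorOne N a - tensorOne N a * DiracOp N) ≤ 1) {k : ℕ}
    (hk : k < N) :
    ‖a ⟨k, by omega⟩ ⟨k, by omega⟩ - a ⟨k + 1, by omega⟩ ⟨k + 1, by omega⟩‖ ≤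
      stepLength N (k + 1) := by
  have hentry := (norm_apply_le_l2_opNorm _ (.inr ⟨k + 1, by omega⟩) (.inl ⟨k, by omega⟩)).trans ha
  rw [DiracOp_mul_tensorOne_sub, fromBlocks_apply₂₁, Emat_mul_sub_mul_Emat_apply a hk, norm_mul,
    Complex.norm_real, Real.norm_of_nonneg (Real.sqrt_nonneg _)] at hentry
  have hstep := sqrt_mul_stepLength_succ hk
  have hpos : 0 < Real.sqrt ((N - k) * (k + 1)) :=
    pos_of_mul_pos_left (hstep ▸ one_pos) (by unfold stepLength; positivity)
  exact le_of_mul_le_mul_left (hentry.trans_eq hstep.symm) hpos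

theorem norm_diag_sub_le_sum_stepLength {a : Matrix (Fin (N + 1)) (Fin (N + 1)) ℂ}
    (ha : opNorm (DiracOp N * tensorOne N a - tensorOne N a * DiracOp N) ≤ 1) {p q : Fin (N + 1)}
    (hpq : p ≤ q) :
    ‖a p p - a q q‖ ≤ ∑ k ∈ Finset.Ico (p : ℕ) q, stepLength N (k + 1) := by
  set f : ℕ → ℂ := fun k => a (Fin.clamp k N) (Fin.clamp k N)
  have hf : ∀ (k : ℕ) (hk : k < N + 1), f k = a ⟨k, hk⟩ ⟨k, hk⟩ := fun k hk => by
    simp only [f, Fin.clamp, Nat.min_eq_left (Nat.le_of_lt_succ hk)]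
  calc ‖a p p - a q q‖ = dist (f p) (f q) := by rw [dist_eq_norm, hf _ p.2, hf _ q.2]
    _ ≤ ∑ k ∈ Finset.Ico (p : ℕ) q, dist (f k) (f (k + 1)) := dist_le_Ico_sum_dist f hpq
    _ ≤ _ := Finset.sum_le_sum fun k hk => by
      have hkN : k < N := by have := q.2; rw [Finset.mem_Ico] at hk; omega
      rw [dist_eq_norm, hf k (by omega), hf (k + 1) (by omega)]
      exact norm_sub_le_stepLength ha hkN

def lowerShift (n : ℕ) : Matrix (Fin n) (Fin n) ℂ :=
  of fun r s => if (r : ℕ) = s + 1 then 1 else 0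

theorem lowerShift_isPartialMonomial (n : ℕ) : (lowerShift n).IsPartialMonomial := by
  constructor <;> intro _ _ _ h h' <;> simp only [lowerShift, of_apply, ne_eq, ite_eq_right_iff,
    one_ne_zero, imp_false, not_not] at h h' <;> exact Fin.ext (by omega)

theorem norm_lowerShift_apply_le {n : ℕ} (r s : Fin n) : ‖lowerShift n r s‖ ≤ 1 := by
  simp only [lowerShift, of_apply]
  split_ifs <;> simp

def potential (N i : ℕ) : ℝ := ∑ k ∈ Finset.range i, stepLength N (k + 1)

theorem Emat_mul_potential_sub (r s : Fin (N + 1)) :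
    Emat N r s * (potential N r - potential N s) = lowerShift (N + 1) r s := by
  simp only [Emat, lowerShift, of_apply]
  split_ifs with h
  · have hs : (s : ℕ) < N := by omega
    rw [h, ← Complex.ofReal_sub, potential, potential, Finset.sum_range_succ, add_sub_cancel_left]
    exact_mod_cast sqrt_mul_stepLength_succ hs
  · exact zero_mul _

def potentialMat (N : ℕ) : Matrix (Fin (N + 1)) (Fin (N + 1)) ℂ :=
  diagonal fun i => (potential N i : ℂ)

theorem potentialMat_isHermitian : (potentialMat N).IsHermitian :=
  isHermitian_diagonal_of_self_adjoint _ (funext fun _ => Complex.conj_ofReal _)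

theorem DiracOp_mul_tensorOne_potentialMat_sub :
    DiracOp N * tensorOne N (potentialMat N) - tensorOne N (potentialMat N) * DiracOp N =
      fromBlocks 0 (lowerShift (N + 1))ᴴ (-lowerShift (N + 1)) 0 := by
  have hH : Commute (Hmat N) (potentialMat N) := commute_diagonal _ _
  rw [DiracOp_mul_tensorOne_sub, sub_eq_zero.2 ((Commute.one_left _).add_left hH).eq,
    sub_eq_zero.2 ((Commute.one_left _).sub_left hH).eq]
  congr 1 <;> ext r s <;> rw [potentialMat, mul_diagonal_sub_diagonal_mul_apply]
  · rw [Fmat, conjTranspose_apply, conjTranspose_apply, ← Emat_mul_potential_sub, star_mul',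
      star_sub]
    simp only [Complex.star_def, Complex.conj_ofReal]
  · rw [Matrix.neg_apply, ← Emat_mul_potential_sub, ← mul_neg, neg_sub]

theorem opNorm_DiracOp_mul_tensorOne_potentialMat_sub_le :
    opNorm (DiracOp N * tensorOne N (potentialMat N) - tensorOne N (potentialMat N) * DiracOp N)
      ≤ 1 := by
  rw [DiracOp_mul_tensorOne_potentialMat_sub]
  refine ((lowerShift_isPartialMonomial _).conjTranspose.fromBlocks_zero
    (lowerShift_isPartialMonomial _).neg).l2_opNorm_le zero_le_one ?_
  rintro (r | r) (s | s) <;> simp [norm_lowerShift_apply_le]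

theorem norm_potentialMat_sub {p q : Fin (N + 1)} (hpq : p ≤ q) :
    ‖potentialMat N p p - potentialMat N q q‖ =
      ∑ k ∈ Finset.Ico (p : ℕ) q, stepLength N (k + 1) := by
  rw [potentialMat, diagonal_apply_eq, diagonal_apply_eq, norm_sub_rev, ← Complex.ofReal_sub,
    Complex.norm_real, potential, potential, ← Finset.sum_Ico_eq_sub _ hpq, Real.norm_of_nonneg]
  exact Finset.sum_nonneg fun k _ => by unfold stepLength; positivity

theorem specDist_basis_general (N : ℕ) (p q : Fin (N + 1)) (hpq : p < q) :
    specDist N (fun a => a p p) (fun a => a q q) =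
      ∑ k ∈ Finset.Icc ((p : ℕ) + 1) (q : ℕ), 1 / Real.sqrt (k * (N + 1 - k)) := by
  have hsum : ∑ k ∈ Finset.Icc ((p : ℕ) + 1) (q : ℕ), 1 / Real.sqrt (k * (N + 1 - k)) =
      ∑ k ∈ Finset.Ico (p : ℕ) q, stepLength N (k + 1) := by
    rw [← Finset.Ico_add_one_right_eq_Icc, Finset.sum_Ico_add']
    rfl
  rw [hsum]
  refine IsGreatest.csSup_eq ⟨⟨potentialMat N, potentialMat_isHermitian,
    opNorm_DiracOp_mul_tensorOne_potentialMat_sub_le, (norm_potentialMat_sub hpq.le).symm⟩, ?_⟩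
  rintro _ ⟨a, -, ha, rfl⟩
  exact norm_diag_sub_le_sum_stepLength ha hpq.le

theorem specDist_basis (N : ℕ) (hN : 1 ≤ N) (p q : Fin (N + 1)) (hpq : p < q) :
    specDist N (fun a => a p p) (fun a => a q q) =
      ∑ k ∈ Finset.Icc ((p : ℕ) + 1) (q : ℕ), 1 / Real.sqrt (k * (N + 1 - k)) :=
  specDist_basis_general N p q hpq
end
end

section
/- Let N ≥ 1, j = N/2, and define the isometry U_j⁺ : ℂ^(N+2) → ℂ^(N+1) ⊗ ℂ² by U_j⁺ |m + ½⟩' := √((j+m+1)/(2j+1)) |m⟩ ⊗ e₁ + √((j−m)/(2j+1)) |m+1⟩ ⊗ e₂ for m = −j−1, …, j (terms with vanishing coefficient omitted), where {|m'⟩' : m' = −j−½, …, j+½} is the standard orthonormal basis of ℂ^(N+2). Then for every (φ, θ), U_j⁺ |φ,θ⟩_{N+1} = |φ,θ⟩_N ⊗ |φ,θ⟩₁, where |φ,θ⟩₁ = e^{iφ/2} cos(θ/2) e₁ + e^{−iφ/2} sin(θ/2) e₂ is the Bloch vector for N = 1 written in the basis e₁ = |½⟩, e₂ = |−½⟩.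 -/
noncomputable section
open Matrix

/-- The Bloch coherent state vector `|φ,θ⟩_N`, with component at index `i` (i.e. `m = i − N/2`)
equal to `C(N, i)^(1/2) e^(−i m φ) (sin(θ/2))^(N/2+m) (cos(θ/2))^(N/2−m)`. -/
def blochVec (N : ℕ) (φ θ : ℝ) : Fin (N + 1) → ℂ := fun i =>
  (Real.sqrt (N.choose i) : ℂ) * Complex.exp (-Complex.I * ((i : ℂ) - (N : ℂ) / 2) * (φ : ℂ)) *
    (Real.sin (θ / 2) : ℂ) ^ (i : ℕ) * (Real.cos (θ / 2) : ℂ) ^ (N - (i : ℕ))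

/-- The Bloch coherent state `ψ^N_(φ,θ)(a) = ⟨φ,θ| a |φ,θ⟩_N`. -/
def psiState (N : ℕ) (a : Matrix (Fin (N + 1)) (Fin (N + 1)) ℂ) (φ θ : ℝ) : ℂ :=
  star (blochVec N φ θ) ⬝ᵥ a.mulVec (blochVec N φ θ)

/-- The isometry `U_j⁺ : ℂ^(N+2) → ℂ^(N+1) ⊗ ℂ²` (`j = N/2`), defined on the basis by
`U_j⁺ |m+½⟩' = √((j+m+1)/(2j+1)) |m⟩⊗e₁ + √((j−m)/(2j+1)) |m+1⟩⊗e₂`, written as a matrix;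
the column index `k = m + j + 1 ∈ {0, …, N+1}`, the `inl` row index is the `⊗e₁` component
and the `inr` row index the `⊗e₂` component. -/
def Uplus (N : ℕ) : Matrix (Fin (N + 1) ⊕ Fin (N + 1)) (Fin (N + 2)) ℂ := fun r k =>
  Sum.elim
    (fun i : Fin (N + 1) =>
      if (i : ℕ) + 1 = (k : ℕ) then (Real.sqrt ((k : ℝ) / (N + 1)) : ℂ) else 0)
    (fun i : Fin (N + 1) =>
      if (i : ℕ) = (k : ℕ) then (Real.sqrt (((N : ℝ) + 1 - (k : ℕ)) / (N + 1)) : ℂ) else 0) r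

/-! Each row of `Uplus N` has a single nonzero entry, so every component of
`Uplus N *ᵥ |φ,θ⟩_{N+1}` is one coefficient times one component of the coherent state. The
square roots match by the absorption identities `(k+1) C(n+1,k+1) = (n+1) C(n,k)` and
`(n+1-k) C(n+1,k) = (n+1) C(n,k)`, while the phase and the powers of `sin(θ/2)`, `cos(θ/2)`
split off exactly one factor of the spin-½ state. -/

namespace Real

theorem sqrt_succ_div_mul_sqrt_choose_succ (n k : ℕ) :
    √(((k : ℝ) + 1) / (n + 1)) * √((n + 1).choose (k + 1)) = √(n.choose k) := by
  rw [← sqrt_mul (by positivity)]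
  congr 1
  have h : ((n : ℝ) + 1) * n.choose k = (n + 1).choose (k + 1) * (k + 1) := by
    exact_mod_cast Nat.add_one_mul_choose_eq n k
  field_simp
  linarith

theorem sqrt_sub_div_mul_sqrt_choose {n k : ℕ} (hk : k ≤ n + 1) :
    √(((n : ℝ) + 1 - k) / (n + 1)) * √((n + 1).choose k) = √(n.choose k) := by
  have hk' : (k : ℝ) ≤ n + 1 := by exact_mod_cast hk
  rw [← sqrt_mul (div_nonneg (by linarith) (by positivity))]
  congr 1
  have h : (n.choose k : ℝ) * (n + 1) = (n + 1).choose k * ((n : ℝ) + 1 - k) := by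
    exact_mod_cast Nat.choose_mul_succ_eq n k
  field_simp
  linarith

end Real

theorem Uplus_mulVec_inl (N : ℕ) (v : Fin (N + 2) → ℂ) (i : Fin (N + 1)) :
    (Uplus N *ᵥ v) (.inl i) = √(((i : ℝ) + 1) / (N + 1)) * v i.succ := by
  rw [mulVec, dotProduct, Finset.sum_eq_single i.succ]
  · simp [Uplus]
  · intro k _ hk
    have : (i : ℕ) + 1 ≠ k := fun h => hk (Fin.ext (by simp [h]))
    simp [Uplus, this]
  · simp

theorem Uplus_mulVec_inr (N : ℕ) (v : Fin (N + 2) → ℂ) (i : Fin (N + 1)) :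
    (Uplus N *ᵥ v) (.inr i) = √(((N : ℝ) + 1 - i) / (N + 1)) * v i.castSucc := by
  rw [mulVec, dotProduct, Finset.sum_eq_single i.castSucc]
  · simp [Uplus]
  · intro k _ hk
    have : (i : ℕ) ≠ k := fun h => hk (Fin.ext (by simp [h]))
    simp [Uplus, this]
  · simp

theorem blochVec_one_one (φ θ : ℝ) :
    blochVec 1 φ θ 1 = Complex.exp (-Complex.I * (1 / 2) * φ) * Real.sin (θ / 2) := by
  simp only [blochVec]
  norm_num

theorem blochVec_one_zero (φ θ : ℝ) :
    blochVec 1 φ θ 0 = Complex.exp (Complex.I * (1 / 2) * φ) * Real.cos (θ / 2) := by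
  simp only [blochVec]
  norm_num

theorem sqrt_mul_blochVec_succ_succ (N : ℕ) (φ θ : ℝ) (i : Fin (N + 1)) :
    √(((i : ℝ) + 1) / (N + 1)) * blochVec (N + 1) φ θ i.succ =
      blochVec N φ θ i * blochVec 1 φ θ 1 := by
  have hsqrt : (√(((i : ℝ) + 1) / (N + 1)) : ℂ) * √((N + 1).choose (i + 1) : ℝ) =
      √(N.choose i : ℝ) := by
    exact_mod_cast Real.sqrt_succ_div_mul_sqrt_choose_succ N i
  have hexp : Complex.exp (-Complex.I * (((i : ℂ) + 1) - ((N : ℂ) + 1) / 2) * φ) =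
      Complex.exp (-Complex.I * ((i : ℂ) - N / 2) * φ) *
        Complex.exp (-Complex.I * (1 / 2) * φ) := by
    rw [← Complex.exp_add]; ring_nf
  rw [blochVec_one_one, blochVec, blochVec]
  simp only [Fin.val_succ, Nat.cast_add, Nat.cast_one, Nat.add_sub_add_right, hexp, ← hsqrt]
  ring

theorem sqrt_mul_blochVec_succ_castSucc (N : ℕ) (φ θ : ℝ) (i : Fin (N + 1)) :
    √(((N : ℝ) + 1 - i) / (N + 1)) * blochVec (N + 1) φ θ i.castSucc =
      blochVec N φ θ i * blochVec 1 φ θ 0 := by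
  have hsqrt : (√(((N : ℝ) + 1 - i) / (N + 1)) : ℂ) * √((N + 1).choose i : ℝ) =
      √(N.choose i : ℝ) := by
    exact_mod_cast Real.sqrt_sub_div_mul_sqrt_choose (by omega : (i : ℕ) ≤ N + 1)
  have hexp : Complex.exp (-Complex.I * ((i : ℂ) - ((N : ℂ) + 1) / 2) * φ) =
      Complex.exp (-Complex.I * ((i : ℂ) - N / 2) * φ) *
        Complex.exp (Complex.I * (1 / 2) * φ) := by
    rw [← Complex.exp_add]; ring_nf
  rw [blochVec_one_zero, blochVec, blochVec]
  simp only [Fin.val_castSucc, Nat.cast_add, Nat.cast_one, Nat.sub_add_comm i.is_le, pow_succ,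
    hexp, ← hsqrt]
  ring

theorem Uplus_bloch_general (N : ℕ) (φ θ : ℝ) :
    (Uplus N).mulVec (blochVec (N + 1) φ θ) =
      Sum.elim (fun i => blochVec N φ θ i * blochVec 1 φ θ 1)
        (fun i => blochVec N φ θ i * blochVec 1 φ θ 0) := by
  funext r
  rcases r with i | i
  · rw [Uplus_mulVec_inl, sqrt_mul_blochVec_succ_succ, Sum.elim_inl]
  · rw [Uplus_mulVec_inr, sqrt_mul_blochVec_succ_castSucc, Sum.elim_inr]

/-- `U_j⁺ |φ,θ⟩_{N+1} = |φ,θ⟩_N ⊗ |φ,θ⟩₁`, where `|φ,θ⟩₁` is the `N = 1`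
Bloch coherent state vector, whose `e₁ = |½⟩` coefficient is `blochVec 1 φ θ 1` and whose
`e₂ = |−½⟩` coefficient is `blochVec 1 φ θ 0`. -/
theorem Uplus_bloch (N : ℕ) (hN : 1 ≤ N) (φ θ : ℝ) :
    (Uplus N).mulVec (blochVec (N + 1) φ θ) =
      Sum.elim (fun i => blochVec N φ θ i * blochVec 1 φ θ 1)
        (fun i => blochVec N φ θ i * blochVec 1 φ θ 0) :=
  Uplus_bloch_general N φ θ
end
end
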